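/- arXiv:1604.04271 — 2 statements merged into one kernel-verified Lean document; each statement's English description precedes it below -/
import Mathlib

section
/- Let W be a tournament kernel on a probability space (S, μ) and let Z be the associated collection of sets. Then the relation ≺ linearly orders the atoms of (S, σ(Z), μ): (antisymmetry) no two atoms A, B satisfy both A ≺ B and B ≺ A; (totality) for any two atoms A, B with μ(A ∩ B) = 0, either A ≺ B or B ≺ A; (transitivity) for atoms A, B, C with pairwise null intersections, A ≺ B and B ≺ C imply A ≺ C. -/
open MeasureTheory

/-- A tournament kernel on a probability space `(S, μ)`. -/
def IsTournamentKernel {S : Type*} [MeasurableSpace S] (μ : Measure S)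
    (W : S → S → ℝ) : Prop :=
  Measurable (Function.uncurry W) ∧ (∀ x y : S, 0 ≤ W x y ∧ W x y ≤ 1) ∧
  (∀ᵐ p ∂(μ.prod μ), W p.1 p.2 + W p.2 p.1 = 1)

/-- `A ≺ B`: `W = 1` almost everywhere on `A × B`. -/
def KPrec {S : Type*} [MeasurableSpace S] (μ : Measure S) (W : S → S → ℝ)
    (A B : Set S) : Prop :=
  ∀ᵐ p ∂(μ.prod μ), p.1 ∈ A → p.2 ∈ B → W p.1 p.2 = 1

/-- The collection `Z`: measurable sets `A` admitting a partition `{B, C}` of the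
complement of `A` with `B ≺ A`, `A ≺ C` and `B ≺ C`. -/
def memZ {S : Type*} [MeasurableSpace S] (μ : Measure S) (W : S → S → ℝ)
    (A : Set S) : Prop :=
  MeasurableSet A ∧ ∃ B C : Set S, MeasurableSet B ∧ MeasurableSet C ∧
    B ∪ C = Aᶜ ∧ B ∩ C = ∅ ∧ KPrec μ W B A ∧ KPrec μ W A C ∧ KPrec μ W B C

/-- `A` is an atom of the measure space `(S, m, μ)`. -/
def IsAtomOf {S : Type*} {m0 : MeasurableSpace S} (m : MeasurableSpace S)
    (μ : @MeasureTheory.Measure S m0) (A : Set S) : Prop :=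
  MeasurableSet[m] A ∧ 0 < μ A ∧
    ¬ ∃ A' : Set S, MeasurableSet[m] A' ∧ A' ⊆ A ∧ 0 < μ A' ∧ μ A' < μ A


section helpers
variable {S : Type*} [MeasurableSpace S] {μ : Measure S} {W : S → S → ℝ}

private lemma kprec_of_ae_subset [SFinite μ] {P Q X Y : Set S}
    (h : KPrec μ W P Q) (h1 : μ (X \ P) = 0) (h2 : μ (Y \ Q) = 0) :
    KPrec μ W X Y := by
  have n1 : μ.prod μ ((X \ P) ×ˢ (Set.univ : Set S)) = 0 := by
    rw [Measure.prod_prod, h1, zero_mul]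
  have n2 : μ.prod μ ((Set.univ : Set S) ×ˢ (Y \ Q)) = 0 := by
    rw [Measure.prod_prod, h2, mul_zero]
  have e1 : ∀ᵐ p ∂(μ.prod μ), p ∉ (X \ P) ×ˢ (Set.univ : Set S) :=
    (measure_eq_zero_iff_ae_notMem (μ := μ.prod μ)).mp n1
  have e2 : ∀ᵐ p ∂(μ.prod μ), p ∉ (Set.univ : Set S) ×ˢ (Y \ Q) :=
    (measure_eq_zero_iff_ae_notMem (μ := μ.prod μ)).mp n2
  filter_upwards [h, e1, e2] with p hp hp1 hp2 hX hY
  have hpP : p.1 ∈ P := by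
    by_contra hc
    exact hp1 ⟨⟨hX, hc⟩, Set.mem_univ _⟩
  have hpQ : p.2 ∈ Q := by
    by_contra hc
    exact hp2 ⟨Set.mem_univ _, hY, hc⟩
  exact hp hpP hpQ

private lemma kprec_empty_left {A : Set S} : KPrec μ W ∅ A :=
  Filter.Eventually.of_forall fun _ h => absurd h (Set.notMem_empty _)

private lemma kprec_empty_right {A : Set S} : KPrec μ W A ∅ :=
  Filter.Eventually.of_forall fun _ _ h => absurd h (Set.notMem_empty _)

private lemma kprec_union_left {P Q R : Set S} (h1 : KPrec μ W P R) (h2 : KPrec μ W Q R) :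
    KPrec μ W (P ∪ Q) R := by
  filter_upwards [h1, h2] with p hp1 hp2 hm hr
  rcases hm with hm | hm
  · exact hp1 hm hr
  · exact hp2 hm hr

private lemma kprec_union_right {P Q R : Set S} (h1 : KPrec μ W P Q) (h2 : KPrec μ W P R) :
    KPrec μ W P (Q ∪ R) := by
  filter_upwards [h1, h2] with p hp1 hp2 hm hr
  rcases hr with hr | hr
  · exact hp1 hm hr
  · exact hp2 hm hr

private lemma kprec_asymm [IsProbabilityMeasure μ] (hW : IsTournamentKernel μ W)
    {X Y : Set S} (hX : μ X ≠ 0) (hY : μ Y ≠ 0)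
    (h1 : KPrec μ W X Y) (h2 : KPrec μ W Y X) : False := by
  have h2' : ∀ᵐ p ∂(μ.prod μ), p.2 ∈ Y → p.1 ∈ X → W p.2 p.1 = 1 :=
    Measure.measurePreserving_swap.quasiMeasurePreserving.ae h2
  have hall := (h1.and (h2'.and hW.2.2))
  set G : Set (S × S) := {p | (p.1 ∈ X → p.2 ∈ Y → W p.1 p.2 = 1) ∧
    (p.2 ∈ Y → p.1 ∈ X → W p.2 p.1 = 1) ∧ W p.1 p.2 + W p.2 p.1 = 1} with hG
  have hGc : μ.prod μ Gᶜ = 0 := by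
    have : ∀ᵐ p ∂(μ.prod μ), p ∈ G := hall
    rwa [Filter.eventually_iff, mem_ae_iff] at this
  have hpos : μ.prod μ (X ×ˢ Y) ≠ 0 := by
    rw [Measure.prod_prod]
    exact mul_ne_zero hX hY
  have hns : ¬ (X ×ˢ Y ⊆ Gᶜ) := fun hsub => hpos (le_antisymm (hGc ▸ measure_mono hsub) bot_le)
  obtain ⟨p, hpm, hpg⟩ := Set.not_subset.mp hns
  have hpG : p ∈ G := Set.not_notMem.mp hpg
  have e1 := hpG.1 hpm.1 hpm.2
  have e2 := hpG.2.1 hpm.2 hpm.1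
  have e3 := hpG.2.2
  rw [e1, e2] at e3
  norm_num at e3

end helpers

private lemma atom_dichotomy {S : Type*} {m0 : MeasurableSpace S} {μ : Measure S}
    [IsFiniteMeasure μ] {m : MeasurableSpace S}
    (hm : m ≤ m0) {A M : Set S}
    (hA : IsAtomOf m μ A) (hM : MeasurableSet[m] M) :
    μ (A ∩ M) = 0 ∨ μ (A \ M) = 0 := by
  rcases eq_or_ne (μ (A ∩ M)) 0 with h | h
  · exact Or.inl h
  right
  have hAM : MeasurableSet[m] (A ∩ M) := MeasurableSet.inter hA.1 hM
  have hle : μ (A ∩ M) ≤ μ A := measure_mono Set.inter_subset_left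
  have hnlt : ¬ μ (A ∩ M) < μ A := fun hlt =>
    hA.2.2 ⟨A ∩ M, hAM, Set.inter_subset_left, pos_iff_ne_zero.mpr h, hlt⟩
  have heq : μ (A ∩ M) = μ A := le_antisymm hle (not_lt.mp hnlt)
  have : μ (A \ M) = μ A - μ (A ∩ M) := by
    rw [← Set.diff_self_inter]
    exact measure_diff Set.inter_subset_left ((hm _ hAM).nullMeasurableSet (μ := μ)) (measure_ne_top μ _)
  rw [this, heq, tsub_self]
section more
variable {S : Type*} [MeasurableSpace S] {μ : MeasureTheory.Measure S} {W : S → S → ℝ}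

private lemma diff_third {D B' C' X : Set S} (hU : B' ∪ C' = Dᶜ) :
    X \ C' ⊆ (X ∩ D) ∪ (X ∩ B') := by
  intro x hx
  have h := Set.ext_iff.mp hU x
  simp only [Set.mem_union, Set.mem_compl_iff, Set.mem_diff, Set.mem_inter_iff] at *
  tauto

private lemma memZ_parts {D B' C' : Set S}
    (hD : MeasurableSet D) (hB : MeasurableSet B') (hC : MeasurableSet C')
    (hU : B' ∪ C' = Dᶜ) (hI : B' ∩ C' = ∅)
    (h1 : KPrec μ W B' D) (h2 : KPrec μ W D C') (h3 : KPrec μ W B' C') :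
    memZ μ W B' ∧ memZ μ W C' := by
  have hBc : D ∪ C' = B'ᶜ := by
    ext x
    have ha := Set.ext_iff.mp hU x
    have hb := Set.ext_iff.mp hI x
    simp only [Set.mem_union, Set.mem_compl_iff, Set.mem_inter_iff, Set.mem_empty_iff_false] at *
    tauto
  have hCc : B' ∪ D = C'ᶜ := by
    ext x
    have ha := Set.ext_iff.mp hU x
    have hb := Set.ext_iff.mp hI x
    simp only [Set.mem_union, Set.mem_compl_iff, Set.mem_inter_iff, Set.mem_empty_iff_false] at *
    tauto
  constructor
  · exact ⟨hB, ∅, D ∪ C', MeasurableSet.empty, hD.union hC, by rw [Set.empty_union, hBc],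
      Set.empty_inter _, kprec_empty_left, kprec_union_right h1 h3, kprec_empty_left⟩
  · exact ⟨hC, B' ∪ D, ∅, hB.union hD, MeasurableSet.empty, by rw [Set.union_empty, hCc],
      Set.inter_empty _, kprec_union_left h3 h2, kprec_empty_right, kprec_empty_right⟩

end more

private lemma atom_locate {S : Type*} {m0 : MeasurableSpace S} {μ : MeasureTheory.Measure S}
    [MeasureTheory.IsFiniteMeasure μ] {m : MeasurableSpace S} (hm : m ≤ m0)
    {X P Q R : Set S} (hX : IsAtomOf m μ X)
    (hP : MeasurableSet[m] P) (hQ : MeasurableSet[m] Q) (hR : MeasurableSet[m] R)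
    (hU : P ∪ Q ∪ R = Set.univ) :
    μ (X \ P) = 0 ∨ μ (X \ Q) = 0 ∨ μ (X \ R) = 0 := by
  rcases atom_dichotomy hm hX hP with h1 | h1
  · rcases atom_dichotomy hm hX hQ with h2 | h2
    · rcases atom_dichotomy hm hX hR with h3 | h3
      · exfalso
        have hsub : X ⊆ (X ∩ P) ∪ (X ∩ Q) ∪ (X ∩ R) := by
          intro x hx
          have h := Set.ext_iff.mp hU x
          simp only [Set.mem_union, Set.mem_inter_iff, Set.mem_univ, iff_true] at *
          tauto
        have : μ X = 0 := MeasureTheory.measure_mono_null hsub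
          (MeasureTheory.measure_union_null (MeasureTheory.measure_union_null h1 h2) h3)
        exact hX.2.1.ne' this
      · exact Or.inr (Or.inr h3)
    · exact Or.inr (Or.inl h2)
  · exact Or.inl h1

private def sepSigma {S : Type*} [MeasurableSpace S] (μ : MeasureTheory.Measure S)
    (A B : Set S) : MeasurableSpace S where
  MeasurableSet' M := MeasurableSet M ∧
    ((μ (A ∩ M) = 0 ∧ μ (B ∩ M) = 0) ∨ (μ (A \ M) = 0 ∧ μ (B \ M) = 0))
  measurableSet_empty := ⟨MeasurableSet.empty, Or.inl (by simp)⟩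
  measurableSet_compl := by
    intro M hM
    refine ⟨hM.1.compl, ?_⟩
    have eA1 : A ∩ Mᶜ = A \ M := (Set.diff_eq A M).symm
    have eA2 : A \ Mᶜ = A ∩ M := Set.diff_compl
    have eB1 : B ∩ Mᶜ = B \ M := (Set.diff_eq B M).symm
    have eB2 : B \ Mᶜ = B ∩ M := Set.diff_compl
    rcases hM.2 with ⟨u, v⟩ | ⟨u, v⟩
    · exact Or.inr ⟨eA2 ▸ u, eB2 ▸ v⟩
    · exact Or.inl ⟨eA1 ▸ u, eB1 ▸ v⟩
  measurableSet_iUnion := by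
    intro f hf
    refine ⟨MeasurableSet.iUnion fun n => (hf n).1, ?_⟩
    by_cases hex : ∃ n, μ (A \ f n) = 0 ∧ μ (B \ f n) = 0
    · obtain ⟨n, hn1, hn2⟩ := hex
      exact Or.inr ⟨MeasureTheory.measure_mono_null
          (Set.diff_subset_diff_right (Set.subset_iUnion f n)) hn1,
        MeasureTheory.measure_mono_null
          (Set.diff_subset_diff_right (Set.subset_iUnion f n)) hn2⟩
    · push_neg at hex
      have h1 : ∀ n, μ (A ∩ f n) = 0 ∧ μ (B ∩ f n) = 0 := by
        intro n
        rcases (hf n).2 with h | h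
        · exact h
        · exact absurd h.2 (hex n h.1)
      refine Or.inl ⟨?_, ?_⟩
      · rw [Set.inter_iUnion]
        exact MeasureTheory.measure_iUnion_null fun n => (h1 n).1
      · rw [Set.inter_iUnion]
        exact MeasureTheory.measure_iUnion_null fun n => (h1 n).2

private lemma sepSigma_iff {S : Type*} [MeasurableSpace S] {μ : MeasureTheory.Measure S}
    {A B M : Set S} : MeasurableSet[sepSigma μ A B] M ↔ MeasurableSet M ∧
      ((μ (A ∩ M) = 0 ∧ μ (B ∩ M) = 0) ∨ (μ (A \ M) = 0 ∧ μ (B \ M) = 0)) := Iff.rfl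

private lemma exists_sep {S : Type*} [MeasurableSpace S] {μ : MeasureTheory.Measure S}
    [MeasureTheory.IsProbabilityMeasure μ] {W : S → S → ℝ} {A B : Set S}
    (hA : IsAtomOf (MeasurableSpace.generateFrom {D : Set S | memZ μ W D}) μ A)
    (hB : IsAtomOf (MeasurableSpace.generateFrom {D : Set S | memZ μ W D}) μ B)
    (hAB : μ (A ∩ B) = 0) :
    ∃ D : Set S, memZ μ W D ∧
      ((μ (A \ D) = 0 ∧ μ (B ∩ D) = 0) ∨ (μ (A ∩ D) = 0 ∧ μ (B \ D) = 0)) := by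
  have hm : MeasurableSpace.generateFrom {D : Set S | memZ μ W D} ≤ ‹MeasurableSpace S› :=
    MeasurableSpace.generateFrom_le fun D hD => hD.1
  by_contra hcon
  push_neg at hcon
  have hle : MeasurableSpace.generateFrom {D : Set S | memZ μ W D} ≤ sepSigma μ A B := by
    refine MeasurableSpace.generateFrom_le fun D hD => ?_
    have hDm : MeasurableSet[MeasurableSpace.generateFrom {D : Set S | memZ μ W D}] D :=
      MeasurableSpace.measurableSet_generateFrom hD
    refine sepSigma_iff.mpr ⟨hD.1, ?_⟩
    rcases atom_dichotomy hm hA hDm with hA0 | hA1 <;>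
      rcases atom_dichotomy hm hB hDm with hB0 | hB1
    · exact Or.inl ⟨hA0, hB0⟩
    · exact absurd hB1 ((hcon D hD).2 hA0)
    · exact absurd hB0 ((hcon D hD).1 hA1)
    · exact Or.inr ⟨hA1, hB1⟩
  have hAm' : MeasurableSet[sepSigma μ A B] A := hle _ hA.1
  rcases (sepSigma_iff.mp hAm').2 with ⟨h, _⟩ | ⟨_, h⟩
  · rw [Set.inter_self] at h
    exact hA.2.1.ne' h
  · have hle2 : μ B ≤ μ (B ∩ A) + μ (B \ A) := MeasureTheory.measure_le_inter_add_diff μ B A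
    rw [Set.inter_comm, hAB, h, add_zero] at hle2
    exact hB.2.1.ne' (le_antisymm hle2 bot_le)

/-- The relation `≺` linearly orders the atoms of `(S, σ(Z), μ)`: it is antisymmetric,
total, and transitive on atoms (with pairwise null intersections). -/
theorem stmt15 {S : Type*} [MeasurableSpace S] (μ : Measure S) [IsProbabilityMeasure μ]
    (W : S → S → ℝ) (hW : IsTournamentKernel μ W)
    :
    (∀ A B : Set S, IsAtomOf (MeasurableSpace.generateFrom {D : Set S | memZ μ W D}) μ A → IsAtomOf (MeasurableSpace.generateFrom {D : Set S | memZ μ W D}) μ B → μ (A ∩ B) = 0 →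
      ¬ (KPrec μ W A B ∧ KPrec μ W B A)) ∧
    (∀ A B : Set S, IsAtomOf (MeasurableSpace.generateFrom {D : Set S | memZ μ W D}) μ A → IsAtomOf (MeasurableSpace.generateFrom {D : Set S | memZ μ W D}) μ B → μ (A ∩ B) = 0 →
      (KPrec μ W A B ∨ KPrec μ W B A)) ∧
    (∀ A B C : Set S, IsAtomOf (MeasurableSpace.generateFrom {D : Set S | memZ μ W D}) μ A → IsAtomOf (MeasurableSpace.generateFrom {D : Set S | memZ μ W D}) μ B → IsAtomOf (MeasurableSpace.generateFrom {D : Set S | memZ μ W D}) μ C →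
      μ (A ∩ B) = 0 → μ (A ∩ C) = 0 → μ (B ∩ C) = 0 →
      KPrec μ W A B → KPrec μ W B C → KPrec μ W A C) := by
  have hm : MeasurableSpace.generateFrom {D : Set S | memZ μ W D} ≤ ‹MeasurableSpace S› :=
    MeasurableSpace.generateFrom_le fun D hD => hD.1
  refine ⟨?_, ?_, ?_⟩
  · -- antisymmetry
    rintro A B hA hB hAB ⟨h1, h2⟩
    exact kprec_asymm hW hA.2.1.ne' hB.2.1.ne' h1 h2
  · -- totality
    intro A B hA hB hAB
    obtain ⟨D, hD, hsep⟩ := exists_sep hA hB hAB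
    obtain ⟨hDmeas, B', C', hB'm, hC'm, hU, hI, h1, h2, h3⟩ := hD
    have hDZ : memZ μ W D := ⟨hDmeas, B', C', hB'm, hC'm, hU, hI, h1, h2, h3⟩
    obtain ⟨hZB', hZC'⟩ := memZ_parts hDmeas hB'm hC'm hU hI h1 h2 h3
    have hB'g : MeasurableSet[MeasurableSpace.generateFrom {D : Set S | memZ μ W D}] B' :=
      MeasurableSpace.measurableSet_generateFrom hZB'
    have hU' : C' ∪ B' = Dᶜ := by rw [Set.union_comm]; exact hU
    rcases hsep with ⟨hA1, hB1⟩ | ⟨hA1, hB1⟩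
    · rcases atom_dichotomy hm hB hB'g with hBB | hBB
      · have hBC' : μ (B \ C') = 0 :=
          measure_mono_null (diff_third hU) (measure_union_null hB1 hBB)
        exact Or.inl (kprec_of_ae_subset h2 hA1 hBC')
      · exact Or.inr (kprec_of_ae_subset h1 hBB hA1)
    · rcases atom_dichotomy hm hA hB'g with hAA | hAA
      · have hAC' : μ (A \ C') = 0 :=
          measure_mono_null (diff_third hU) (measure_union_null hA1 hAA)
        exact Or.inr (kprec_of_ae_subset h2 hB1 hAC')
      · exact Or.inl (kprec_of_ae_subset h1 hAA hB1)
  · -- transitivity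
    intro A B C hA hB hC hABn hACn hBCn hAB hBC
    obtain ⟨D, hD, hsep⟩ := exists_sep hA hC hACn
    obtain ⟨hDmeas, B', C', hB'm, hC'm, hU, hI, h1, h2, h3⟩ := hD
    have hDZ : memZ μ W D := ⟨hDmeas, B', C', hB'm, hC'm, hU, hI, h1, h2, h3⟩
    obtain ⟨hZB', hZC'⟩ := memZ_parts hDmeas hB'm hC'm hU hI h1 h2 h3
    have hB'g : MeasurableSet[MeasurableSpace.generateFrom {D : Set S | memZ μ W D}] B' :=
      MeasurableSpace.measurableSet_generateFrom hZB'
    have hC'g : MeasurableSet[MeasurableSpace.generateFrom {D : Set S | memZ μ W D}] C' :=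
      MeasurableSpace.measurableSet_generateFrom hZC'
    have hDg : MeasurableSet[MeasurableSpace.generateFrom {D : Set S | memZ μ W D}] D :=
      MeasurableSpace.measurableSet_generateFrom hDZ
    have hU' : C' ∪ B' = Dᶜ := by rw [Set.union_comm]; exact hU
    have hUniv : B' ∪ D ∪ C' = Set.univ := by
      ext x
      have ha := Set.ext_iff.mp hU x
      simp only [Set.mem_union, Set.mem_compl_iff, Set.mem_univ, iff_true] at *
      tauto
    rcases hsep with ⟨hA1, hC1⟩ | ⟨hA1, hC1⟩
    · -- A ⊆ D a.e., C ∩ D null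
      rcases atom_dichotomy hm hC hC'g with hCC | hCC
      · -- C ⊆ B' a.e.
        have hCB' : μ (C \ B') = 0 :=
          measure_mono_null (diff_third hU') (measure_union_null hC1 hCC)
        rcases atom_locate hm hB hB'g hDg hC'g hUniv with hBB | hBB | hBB
        · exact (kprec_asymm hW hA.2.1.ne' hB.2.1.ne' hAB
            (kprec_of_ae_subset h1 hBB hA1)).elim
        · exact (kprec_asymm hW hB.2.1.ne' hC.2.1.ne' hBC
            (kprec_of_ae_subset h1 hCB' hBB)).elim
        · exact (kprec_asymm hW hB.2.1.ne' hC.2.1.ne' hBC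
            (kprec_of_ae_subset h3 hCB' hBB)).elim
      · exact kprec_of_ae_subset h2 hA1 hCC
    · -- C ⊆ D a.e., A ∩ D null
      rcases atom_dichotomy hm hA hB'g with hAA | hAA
      · have hAC' : μ (A \ C') = 0 :=
          measure_mono_null (diff_third hU) (measure_union_null hA1 hAA)
        rcases atom_locate hm hB hB'g hDg hC'g hUniv with hBB | hBB | hBB
        · exact (kprec_asymm hW hA.2.1.ne' hB.2.1.ne' hAB
            (kprec_of_ae_subset h3 hBB hAC')).elim
        · exact (kprec_asymm hW hA.2.1.ne' hB.2.1.ne' hAB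
            (kprec_of_ae_subset h2 hBB hAC')).elim
        · exact (kprec_asymm hW hB.2.1.ne' hC.2.1.ne' hBC
            (kprec_of_ae_subset h2 hC1 hBB)).elim
      · exact kprec_of_ae_subset h1 hAA hC1
end

section
/- Let W be a tournament kernel on a probability space (S, μ). Then there exists a countable (possibly empty) family {S_i}_{i∈Q} of pairwise disjoint measurable subsets of S with μ(S_i) > 0 for each i ∈ Q such that, with I = S ∖ ⋃_{i∈Q} S_i: (1) for each i ∈ Q, the restriction W|_{S_i}, regarded as a tournament kernel on (S_i, μ(·∩S_i)/μ(S_i)), is irreducible; (2) for any distinct i, j ∈ Q, either S_i ≺ S_j or S_j ≺ S_i, and this relation linearly orders Q; (3) for every measurable A ⊆ I with μ(A) > 0, the restriction W|_A, regarded as a tournament kernel on (A, μ(·∩A)/μ(A)), is transitive; (4) for μ-a.e. x ∈ I and every i ∈ Q, either W(x,y) = 1 for μ-a.e. y ∈ S_i or W(x,y) = 0 for μ-a.e. y ∈ S_i. -/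
open MeasureTheory

open Set Filter
open scoped ENNReal

/-!
Call a measurable `B` an initial segment when `B ≺ Bᶜ`. Two initial segments are nested up to a
null set, since otherwise `W` would be both `1` and `0` on a product of sets of positive measure;
so they form a chain, parametrised up to null sets by the set `V` of their measures. Choosing
genuinely nested representatives `L d` over a countable dense part of `V` that contains the
endpoints of all gaps of `V`, the components are the sets `L b \ L a` over the gaps `(a, b)`.
A component is irreducible because a splitting of it would give an initial segment of measure
inside the gap. Outside the components, a.e. pair of points is separated by some `L d`, and `W`
is `1` from the inner to the outer point; this makes `W` transitive there.
-/

namespace MeasureTheory.Measure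

variable {ι : Type*} [Fintype ι] [DecidableEq ι] {α : ι → Type*} [∀ i, MeasurableSpace (α i)]
  (μ : ∀ i, Measure (α i)) [∀ i, IsFiniteMeasure (μ i)]

lemma pi_map_eval_pair {i j : ι} (hij : i ≠ j) :
    (Measure.pi μ).map (fun x ↦ (x i, x j)) =
      (∏ k ∈ (Finset.univ.erase i).erase j, μ k univ) • (μ i).prod (μ j) := by
  have := (μ i).smul_finite (c := ∏ k ∈ (Finset.univ.erase i).erase j, μ k univ)
    (ENNReal.prod_ne_top fun k _ ↦ measure_ne_top _ _)
  rw [← prod_smul_left]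
  refine (prod_eq fun s t hs ht ↦ ?_).symm
  have hpre : (fun x : ∀ k, α k ↦ (x i, x j)) ⁻¹' s ×ˢ t =
      univ.pi (Function.update (Function.update (fun k ↦ univ) i s) j t) := by
    ext x
    simp only [mem_preimage, mem_prod, mem_univ_pi]
    refine ⟨fun ⟨hs, ht⟩ k ↦ ?_, fun h ↦ ⟨by simpa [hij] using h i, by simpa using h j⟩⟩
    by_cases hkj : k = j
    · subst hkj; simpa using ht
    by_cases hki : k = i
    · subst hki; simpa [hkj] using hs
    · simp [hki, hkj]
  rw [map_apply (by fun_prop) (hs.prod ht), hpre, pi_pi, smul_apply, smul_eq_mul,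
    ← Finset.mul_prod_erase _ _ (Finset.mem_univ i),
    ← Finset.mul_prod_erase _ _ (Finset.mem_erase.2 ⟨hij.symm, Finset.mem_univ j⟩)]
  simp only [Function.update_self, Function.update_of_ne hij]
  rw [Finset.prod_congr rfl fun k hk ↦ by
    rw [Function.update_of_ne (Finset.ne_of_mem_erase hk),
      Function.update_of_ne (Finset.ne_of_mem_erase (Finset.mem_of_mem_erase hk))]]
  ring

lemma quasiMeasurePreserving_eval_pair {i j : ι} (hij : i ≠ j) :
    QuasiMeasurePreserving (fun x ↦ (x i, x j)) (Measure.pi μ) ((μ i).prod (μ j)) :=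
  ⟨by fun_prop, by rw [pi_map_eval_pair μ hij]; exact smul_absolutelyContinuous⟩

end MeasureTheory.Measure

section Gap

variable {α : Type*} [LinearOrder α]

structure IsGap (V : Set α) (a b : α) : Prop where
  left_mem : a ∈ V
  right_mem : b ∈ V
  lt : a < b
  le_or_le : ∀ v ∈ V, v ≤ a ∨ b ≤ v

namespace IsGap

variable {V : Set α} {a b a' b' : α}

lemma le_of_lt (h : IsGap V a b) (h' : IsGap V a' b') (hlt : a < a') : b ≤ a' :=
  (h.le_or_le a' h'.left_mem).resolve_left hlt.not_ge

lemma right_unique (h : IsGap V a b) (h' : IsGap V a b') : b = b' :=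
  le_antisymm ((h.le_or_le b' h'.right_mem).resolve_left h'.lt.not_ge)
    ((h'.le_or_le b h.right_mem).resolve_left h.lt.not_ge)

lemma disjoint_Ioo (h : IsGap V a b) (h' : IsGap V a' b') (hne : (a, b) ≠ (a', b')) :
    Disjoint (Ioo a b) (Ioo a' b') := by
  rcases lt_trichotomy a a' with hlt | rfl | hlt
  · exact (Ioc_disjoint_Ioc_of_le (h.le_of_lt h' hlt)).mono Ioo_subset_Ioc_self Ioo_subset_Ioc_self
  · exact (hne (by rw [h.right_unique h'])).elim
  · exact ((Ioc_disjoint_Ioc_of_le (h'.le_of_lt h hlt)).mono Ioo_subset_Ioc_self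
      Ioo_subset_Ioc_self).symm

end IsGap

def gaps (V : Set α) : Set (α × α) :=
  {g | IsGap V g.1 g.2}

lemma injective_fst_gaps (V : Set α) : Function.Injective fun g : gaps V ↦ g.1.1 :=
  fun g g' h ↦ Subtype.ext <| Prod.ext h <| g.2.right_unique <| by
    rw [show g.1.1 = g'.1.1 from h]; exact g'.2

variable [TopologicalSpace α] [OrderTopology α]

lemma countable_gaps [DenselyOrdered α] [TopologicalSpace.SeparableSpace α] (V : Set α) :
    (gaps V).Countable :=
  Set.PairwiseDisjoint.countable_of_isOpen (fun _ hg _ hg' hne ↦ hg.disjoint_Ioo hg' hne)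
    (fun _ _ ↦ isOpen_Ioo) fun _ hg ↦ nonempty_Ioo.2 hg.lt

lemma isGap_sSup_sInf {β : Type*} [CompleteLinearOrder β] [TopologicalSpace β] [OrderTopology β]
    {V D lo hi : Set β} (hVD : V ⊆ closure D) (hD : D ⊆ lo ∪ hi) (hp : sSup lo ∈ V)
    (hq : sInf hi ∈ V) (hpq : sSup lo < sInf hi) : IsGap V (sSup lo) (sInf hi) := by
  refine ⟨hp, hq, hpq, fun v hv ↦ ?_⟩
  by_contra! hvgap
  obtain ⟨d, ⟨hd₁, hd₂⟩, hdD⟩ :=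
    mem_closure_iff.1 (hVD hv) _ isOpen_Ioo (mem_Ioo.2 (hvgap.imp id id))
  rcases hD hdD with hd | hd
  · exact (le_sSup hd).not_gt hd₁
  · exact (sInf_le hd).not_gt hd₂

lemma exists_countable_dense_subset_mem_of_isGap [DenselyOrdered α] [SecondCountableTopology α]
    [TopologicalSpace.PseudoMetrizableSpace α] {V : Set α} {c : α} (hc : c ∈ V) :
    ∃ D ⊆ V, D.Countable ∧ V ⊆ closure D ∧ c ∈ D ∧
      ∀ a b, IsGap V a b → a ∈ D ∧ b ∈ D := by
  obtain ⟨t, htV, htc, hVt⟩ :=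
    (TopologicalSpace.IsSeparable.of_separableSpace V).exists_countable_dense_subset
  set G := gaps V
  refine ⟨insert c (t ∪ Prod.fst '' G ∪ Prod.snd '' G), ?_, ?_, ?_, mem_insert _ _, ?_⟩
  · rintro v (rfl | (hv | ⟨g, hg, rfl⟩) | ⟨g, hg, rfl⟩)
    exacts [hc, htV hv, hg.left_mem, hg.right_mem]
  · have hG := countable_gaps V
    exact ((htc.union (hG.image _)).union (hG.image _)).insert c
  · exact hVt.trans (closure_mono fun v hv ↦ .inr (.inl (.inl hv)))
  · exact fun a b hab ↦ ⟨.inr (.inl (.inr ⟨(a, b), hab, rfl⟩)), .inr (.inr ⟨(a, b), hab, rfl⟩)⟩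

end Gap

section Kernel

variable {S : Type*} [MeasurableSpace S] {μ : Measure S} {W : S → S → ℝ}

lemma KPrec.mono {A B A' B' : Set S} (h : KPrec μ W A B) (hA : A' ⊆ A) (hB : B' ⊆ B) :
    KPrec μ W A' B' := by
  filter_upwards [h] with p hp h1 h2 using hp (hA h1) (hB h2)

lemma KPrec.restrict [SFinite μ] {A B : Set S} (h : KPrec μ W A B) (s : Set S) :
    KPrec (μ.restrict s) W A B := by
  rw [KPrec, Measure.prod_restrict]
  exact ae_restrict_of_ae h

lemma IsTournamentKernel.ae_eq_zero_of_kPrec [SFinite μ] (hW : IsTournamentKernel μ W)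
    {A B : Set S} (h : KPrec μ W A B) :
    ∀ᵐ p ∂μ.prod μ, p.1 ∈ B → p.2 ∈ A → W p.1 p.2 = 0 := by
  have hswap : ∀ᵐ p ∂μ.prod μ, p.2 ∈ A → p.1 ∈ B → W p.2 p.1 = 1 :=
    (Measure.measurePreserving_swap.quasiMeasurePreserving).ae h
  filter_upwards [hswap, hW.2.2] with p hp hsum h1 h2
  linarith [hp h2 h1]

lemma ae_transitive_of_ae_separated {ν : Measure S} [IsFiniteMeasure ν] {ι : Type*}
    [Countable ι] {C : ι → Set S} (hanti : ∀ᵐ p ∂ν.prod ν, W p.1 p.2 + W p.2 p.1 = 1)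
    (hprec : ∀ i, KPrec ν W (C i) (C i)ᶜ)
    (hsep : ∀ᵐ p ∂ν.prod ν, ∃ i, ¬(p.1 ∈ C i ↔ p.2 ∈ C i)) :
    ∀ᵐ x ∂(Measure.pi fun _ : Fin 3 ↦ ν),
      0 < W (x 0) (x 1) → 0 < W (x 1) (x 2) → W (x 0) (x 2) = 1 := by
  have hgood : ∀ᵐ p ∂ν.prod ν, W p.1 p.2 + W p.2 p.1 = 1 ∧
      (∀ i, p.1 ∈ C i → p.2 ∉ C i → W p.1 p.2 = 1) ∧ ∃ i, ¬(p.1 ∈ C i ↔ p.2 ∈ C i) := by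
    filter_upwards [hanti, ae_all_iff.2 hprec, hsep] with p h1 h2 h3 using ⟨h1, h2, h3⟩
  have hpair : ∀ i j : Fin 3, i ≠ j → ∀ᵐ x ∂(Measure.pi fun _ : Fin 3 ↦ ν),
      W (x i) (x j) + W (x j) (x i) = 1 ∧
      (∀ k, x i ∈ C k → x j ∉ C k → W (x i) (x j) = 1) ∧ ∃ k, ¬(x i ∈ C k ↔ x j ∈ C k) :=
    fun i j hij ↦ (Measure.quasiMeasurePreserving_eval_pair (fun _ ↦ ν) hij).ae hgood
  -- membership in the `C k` can only be lost along a positive edge, so the set separating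
  -- `x 0` from `x 2` contains `x 0`
  have hdown : ∀ a b : S, W b a + W a b = 1 → (∀ k, b ∈ C k → a ∉ C k → W b a = 1) →
      0 < W a b → ∀ k, b ∈ C k → a ∈ C k := fun a b hsum hb hpos k hbk ↦ by
    by_contra hak
    linarith [hb k hbk hak]
  filter_upwards [hpair 1 0 (by decide), hpair 2 1 (by decide), hpair 0 2 (by decide)]
    with x ⟨s10, p10, _⟩ ⟨s21, p21, _⟩ ⟨_, p02, k, hk⟩ h01 h12
  have h20 : x 2 ∈ C k → x 0 ∈ C k := fun h ↦ hdown _ _ s10 p10 h01 k (hdown _ _ s21 p21 h12 k h)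
  exact p02 k (by tauto) (by tauto)

variable (μ W) in
def IsInitialSegment (B : Set S) : Prop :=
  MeasurableSet B ∧ KPrec μ W B Bᶜ

namespace IsInitialSegment

lemma univ : IsInitialSegment μ W univ :=
  ⟨MeasurableSet.univ, .of_forall fun _ _ h ↦ (h trivial).elim⟩

lemma biUnion {ι : Type*} {E : Set ι} (hE : E.Countable) {B : ι → Set S}
    (h : ∀ i ∈ E, IsInitialSegment μ W (B i)) : IsInitialSegment μ W (⋃ i ∈ E, B i) := by
  refine ⟨.biUnion hE fun i hi ↦ (h i hi).1, ?_⟩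
  filter_upwards [(ae_ball_iff hE).2 fun i hi ↦ (h i hi).2] with p hp h₁ h₂
  obtain ⟨i, hi, hpi⟩ := mem_iUnion₂.1 h₁
  exact hp i hi hpi fun h ↦ h₂ (mem_biUnion hi h)

lemma biInter {ι : Type*} {E : Set ι} (hE : E.Countable) {B : ι → Set S}
    (h : ∀ i ∈ E, IsInitialSegment μ W (B i)) : IsInitialSegment μ W (⋂ i ∈ E, B i) := by
  refine ⟨.biInter hE fun i hi ↦ (h i hi).1, ?_⟩
  filter_upwards [(ae_ball_iff hE).2 fun i hi ↦ (h i hi).2] with p hp h₁ h₂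
  simp only [mem_compl_iff, mem_iInter₂, not_forall] at h₂
  obtain ⟨i, hi, hpi⟩ := h₂
  exact hp i hi (mem_iInter₂.1 h₁ i hi) hpi

lemma union_of_subset_diff {B₁ B₂ C : Set S} (h₁ : IsInitialSegment μ W B₁)
    (h₂ : IsInitialSegment μ W B₂) (hC : MeasurableSet C) (hCB : C ⊆ B₂ \ B₁)
    (hprec : KPrec μ W C ((B₂ \ B₁) \ C)) : IsInitialSegment μ W (B₁ ∪ C) := by
  refine ⟨h₁.1.union hC, ?_⟩
  filter_upwards [h₁.2, h₂.2, hprec] with p hp₁ hp₂ hpC hp hq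
  simp only [mem_compl_iff, mem_union, not_or] at hq
  rcases hp with hp | hp
  · exact hp₁ hp hq.1
  · by_cases hq₂ : p.2 ∈ B₂
    · exact hpC hp ⟨⟨hq₂, hq.1⟩, hq.2⟩
    · exact hp₂ (hCB hp).1 hq₂

variable [SFinite μ]

lemma ae_le_or_ae_le (hW : IsTournamentKernel μ W) {B C : Set S} (hB : IsInitialSegment μ W B)
    (hC : IsInitialSegment μ W C) : B ≤ᵐ[μ] C ∨ C ≤ᵐ[μ] B := by
  simp only [ae_le_set, ← not_ne_iff, ← not_and_or]
  intro ⟨hBC, hCB⟩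
  -- on `(B \ C) × (C \ B)`, `B ≺ Bᶜ` forces `W = 1` and `C ≺ Cᶜ` forces `W = 0`
  have hnull : μ.prod μ ((B \ C) ×ˢ (C \ B)) = 0 := by
    rw [measure_eq_zero_iff_ae_notMem]
    filter_upwards [hB.2, hW.ae_eq_zero_of_kPrec hC.2] with p h1 h0 ⟨hp1, hp2⟩
    linarith [h1 hp1.1 hp2.2, h0 hp1.2 hp2.1]
  rw [Measure.prod_prod, mul_eq_zero] at hnull
  tauto

lemma ae_le_of_measure_le [IsFiniteMeasure μ] (hW : IsTournamentKernel μ W) {B C : Set S}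
    (hB : IsInitialSegment μ W B) (hC : IsInitialSegment μ W C) (hle : μ B ≤ μ C) :
    B ≤ᵐ[μ] C :=
  (hB.ae_le_or_ae_le hW hC).elim id fun h ↦
    (ae_eq_of_ae_subset_of_measure_ge h hle hC.1.nullMeasurableSet (measure_ne_top _ _)).symm.le

lemma ae_dichotomy_of_notMem_diff (hW : IsTournamentKernel μ W) {B₁ B₂ : Set S}
    (h₁ : IsInitialSegment μ W B₁) (h₂ : IsInitialSegment μ W B₂) :
    ∀ᵐ x ∂μ, x ∉ B₂ \ B₁ →
      (∀ᵐ y ∂μ.restrict (B₂ \ B₁), W x y = 1) ∨ (∀ᵐ y ∂μ.restrict (B₂ \ B₁), W x y = 0) := by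
  filter_upwards [Measure.ae_ae_of_ae_prod h₁.2,
    Measure.ae_ae_of_ae_prod (hW.ae_eq_zero_of_kPrec h₂.2)] with x hx₁ hx₂ hx
  rw [ae_restrict_iff' (h₂.1.diff h₁.1), ae_restrict_iff' (h₂.1.diff h₁.1)]
  by_cases hxB₁ : x ∈ B₁
  · exact .inl (hx₁.mono fun y hy hyB ↦ hy hxB₁ hyB.2)
  · exact .inr (hx₂.mono fun y hy hyB ↦ hy (fun h ↦ hx ⟨h, hxB₁⟩) hyB.1)

end IsInitialSegment

end Kernel

section Chain

variable {S : Type*} [MeasurableSpace S] {μ : Measure S} {W : S → S → ℝ}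

variable (μ W) in
def initialMeasures : Set ℝ≥0∞ :=
  μ '' {B | IsInitialSegment μ W B}

variable (μ W) in
/-- Junk unless `v ∈ initialMeasures μ W`. -/
noncomputable def segmentOfMeasure (v : ℝ≥0∞) : Set S :=
  Classical.epsilon fun B ↦ IsInitialSegment μ W B ∧ μ B = v

lemma segmentOfMeasure_spec {v : ℝ≥0∞} (hv : v ∈ initialMeasures μ W) :
    IsInitialSegment μ W (segmentOfMeasure μ W v) ∧ μ (segmentOfMeasure μ W v) = v := by
  obtain ⟨B, hB, rfl⟩ := hv
  exact Classical.epsilon_spec (p := fun C ↦ IsInitialSegment μ W C ∧ μ C = μ B) ⟨B, hB, rfl⟩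

variable (μ W) in
/-- The chosen segments are nested only up to null sets; these unions are nested. -/
def lowerSegment (D : Set ℝ≥0∞) (t : ℝ≥0∞) : Set S :=
  ⋃ d ∈ D ∩ Iic t, segmentOfMeasure μ W d

lemma segmentOfMeasure_subset_lowerSegment {D : Set ℝ≥0∞} {d t : ℝ≥0∞} (hd : d ∈ D)
    (hdt : d ≤ t) : segmentOfMeasure μ W d ⊆ lowerSegment μ W D t :=
  subset_biUnion_of_mem (u := fun d ↦ segmentOfMeasure μ W d) ⟨hd, hdt⟩

lemma lowerSegment_mono (D : Set ℝ≥0∞) : Monotone (lowerSegment μ W D) :=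
  fun _ _ h ↦ biUnion_subset_biUnion_left fun _ hd ↦ ⟨hd.1, hd.2.trans h⟩

variable (μ W) in
def gapComponent (D : Set ℝ≥0∞) (g : ℝ≥0∞ × ℝ≥0∞) : Set S :=
  lowerSegment μ W D g.2 \ lowerSegment μ W D g.1

variable (μ W) in
structure IsSkeleton (D : Set ℝ≥0∞) : Prop where
  countable : D.Countable
  subset : D ⊆ initialMeasures μ W
  dense : initialMeasures μ W ⊆ closure D
  measure_univ_mem : μ univ ∈ D
  mem_of_isGap : ∀ a b, IsGap (initialMeasures μ W) a b → a ∈ D ∧ b ∈ D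

variable (μ W) in
lemma exists_isSkeleton : ∃ D, IsSkeleton μ W D := by
  obtain ⟨D, hDV, hDc, hVD, huniv, hgap⟩ :=
    exists_countable_dense_subset_mem_of_isGap (V := initialMeasures μ W) ⟨univ, .univ, rfl⟩
  exact ⟨D, hDc, hDV, hVD, huniv, hgap⟩

namespace IsSkeleton

variable {D : Set ℝ≥0∞}

lemma isInitialSegment_lowerSegment (hD : IsSkeleton μ W D) (t : ℝ≥0∞) :
    IsInitialSegment μ W (lowerSegment μ W D t) :=
  .biUnion (hD.countable.mono inter_subset_left) fun _ hd ↦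
    (segmentOfMeasure_spec (hD.subset hd.1)).1

lemma measurableSet_gapComponent (hD : IsSkeleton μ W D) (g : ℝ≥0∞ × ℝ≥0∞) :
    MeasurableSet (gapComponent μ W D g) :=
  (hD.isInitialSegment_lowerSegment g.2).1.diff (hD.isInitialSegment_lowerSegment g.1).1

variable [IsFiniteMeasure μ]

lemma measure_lowerSegment (hD : IsSkeleton μ W D) (hW : IsTournamentKernel μ W) {d : ℝ≥0∞}
    (hd : d ∈ D) : μ (lowerSegment μ W D d) = d := by
  obtain ⟨hC, hCμ⟩ := segmentOfMeasure_spec (hD.subset hd)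
  have hle : lowerSegment μ W D d ≤ᵐ[μ] segmentOfMeasure μ W d := by
    unfold lowerSegment
    refine (Filter.EventuallyLE.countable_bUnion (hD.countable.mono inter_subset_left)
      fun d' hd' ↦ ?_).trans (iUnion₂_subset fun _ _ ↦ subset_rfl).eventuallyLE
    obtain ⟨hC', hC'μ⟩ := segmentOfMeasure_spec (hD.subset hd'.1)
    exact hC'.ae_le_of_measure_le hW hC (by rw [hC'μ, hCμ]; exact hd'.2)
  exact (measure_congr (hle.antisymm
    (segmentOfMeasure_subset_lowerSegment hd le_rfl).eventuallyLE)).trans hCμ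

lemma measure_biUnion_lowerSegment (hD : IsSkeleton μ W D) (hW : IsTournamentKernel μ W)
    {E : Set ℝ≥0∞} (hE : E ⊆ D) : μ (⋃ d ∈ E, lowerSegment μ W D d) = sSup E := by
  have := (hD.countable.mono hE).to_subtype
  have hdir : Directed (· ⊆ ·) fun d : E ↦ lowerSegment μ W D d :=
    ((lowerSegment_mono D).comp (Subtype.mono_coe _)).directed_le
  rw [biUnion_eq_iUnion, hdir.measure_iUnion, sSup_eq_iSup']
  exact iSup_congr fun d ↦ hD.measure_lowerSegment hW (hE d.2)

lemma measure_biInter_lowerSegment (hD : IsSkeleton μ W D) (hW : IsTournamentKernel μ W)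
    {E : Set ℝ≥0∞} (hE : E ⊆ D) (hne : E.Nonempty) :
    μ (⋂ d ∈ E, lowerSegment μ W D d) = sInf E := by
  have := (hD.countable.mono hE).to_subtype
  have hdir : Directed (· ⊇ ·) fun d : E ↦ lowerSegment μ W D d :=
    ((lowerSegment_mono D).comp (Subtype.mono_coe _)).directed_ge
  rw [biInter_eq_iInter, hdir.measure_iInter
    (fun d : E ↦ (hD.isInitialSegment_lowerSegment d).1.nullMeasurableSet)
    ⟨⟨_, hne.some_mem⟩, measure_ne_top _ _⟩, sInf_eq_iInf']
  exact iInf_congr fun d ↦ hD.measure_lowerSegment hW (hE d.2)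

lemma measure_gapComponent (hD : IsSkeleton μ W D) (hW : IsTournamentKernel μ W)
    {g : ℝ≥0∞ × ℝ≥0∞} (hg : g ∈ gaps (initialMeasures μ W)) :
    μ (gapComponent μ W D g) = g.2 - g.1 := by
  obtain ⟨h₁, h₂⟩ := hD.mem_of_isGap _ _ hg
  rw [gapComponent, measure_sdiff (lowerSegment_mono D hg.lt.le)
    (hD.isInitialSegment_lowerSegment _).1.nullMeasurableSet (measure_ne_top _ _),
    hD.measure_lowerSegment hW h₁, hD.measure_lowerSegment hW h₂]

/-- Adding such a `B` to the lower end of the gap would give an initial segment whose measure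
lies inside the gap. -/
lemma not_exists_initial_subset_gapComponent (hD : IsSkeleton μ W D)
    (hW : IsTournamentKernel μ W) {g : ℝ≥0∞ × ℝ≥0∞}
    (hg : g ∈ gaps (initialMeasures μ W)) :
    ¬ ∃ B, MeasurableSet B ∧ B ⊆ gapComponent μ W D g ∧ 0 < μ B ∧
      μ B < μ (gapComponent μ W D g) ∧ KPrec μ W B (gapComponent μ W D g \ B) := by
  rintro ⟨B, hB, hBT, hpos, hlt, hprec⟩
  have hinit := (hD.isInitialSegment_lowerSegment g.1).union_of_subset_diff
    (hD.isInitialSegment_lowerSegment g.2) hB hBT hprec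
  have hμ : μ (lowerSegment μ W D g.1 ∪ B) = g.1 + μ B := by
    rw [measure_union (disjoint_right.2 fun x hx ↦ (hBT hx).2) hB,
      hD.measure_lowerSegment hW (hD.mem_of_isGap _ _ hg).1]
  rw [hD.measure_gapComponent hW hg, lt_tsub_iff_left] at hlt
  rcases hg.le_or_le _ ⟨_, hinit, rfl⟩ with h | h <;> rw [hμ] at h
  · exact h.not_gt (ENNReal.lt_add_right (ne_top_of_lt hg.lt) hpos.ne')
  · exact h.not_gt hlt

lemma ae_dichotomy_gapComponent (hD : IsSkeleton μ W D)
    (hW : IsTournamentKernel μ W) :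
    ∀ᵐ x ∂μ.restrict (⋃ g : gaps (initialMeasures μ W), gapComponent μ W D g)ᶜ,
      ∀ g : gaps (initialMeasures μ W),
        (∀ᵐ y ∂μ.restrict (gapComponent μ W D g), W x y = 1) ∨
        (∀ᵐ y ∂μ.restrict (gapComponent μ W D g), W x y = 0) := by
  have := (countable_gaps (initialMeasures μ W)).to_subtype
  have hI : MeasurableSet (⋃ g : gaps (initialMeasures μ W), gapComponent μ W D g) :=
    .iUnion fun g ↦ hD.measurableSet_gapComponent g.1
  rw [ae_restrict_iff' hI.compl]
  have hall := ae_all_iff.2 fun g : gaps (initialMeasures μ W) ↦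
    (hD.isInitialSegment_lowerSegment g.1.1).ae_dichotomy_of_notMem_diff hW
      (hD.isInitialSegment_lowerSegment g.1.2)
  filter_upwards [hall] with x hx hxI g
  exact hx g fun h ↦ hxI (mem_iUnion_of_mem g h)

/-- The levels `d` with `x ∉ L d` all lie below those with `x ∈ L d`; their supremum and
infimum either coincide, making the set null, or bound a gap, whose component contains the set. -/
lemma measure_sameSide_diff_iUnion_gapComponent (hD : IsSkeleton μ W D)
    (hW : IsTournamentKernel μ W) {x : S} (hx : x ∈ lowerSegment μ W D (μ univ)) :
    μ ({y | ∀ d ∈ D, (x ∈ lowerSegment μ W D d ↔ y ∈ lowerSegment μ W D d)} \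
      ⋃ g : gaps (initialMeasures μ W), gapComponent μ W D g) = 0 := by
  set L := lowerSegment μ W D
  set lo := {d ∈ D | x ∉ L d}
  set hi := {d ∈ D | x ∈ L d}
  have hlohi : ∀ d ∈ lo, ∀ d' ∈ hi, d < d' := fun d hd d' hd' ↦
    lt_of_not_ge fun h ↦ hd.2 (lowerSegment_mono D h hd'.2)
  have hsub : {y | ∀ d ∈ D, (x ∈ L d ↔ y ∈ L d)} ⊆ (⋂ d ∈ hi, L d) \ ⋃ d ∈ lo, L d :=
    fun y hy ↦ ⟨mem_iInter₂.2 fun d hd ↦ (hy d hd.1).1 hd.2, fun h ↦ by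
      obtain ⟨d, hd, hyd⟩ := mem_iUnion₂.1 h
      exact hd.2 ((hy d hd.1).2 hyd)⟩
  have hlo : IsInitialSegment μ W (⋃ d ∈ lo, L d) :=
    .biUnion (hD.countable.mono (sep_subset D _)) fun d _ ↦ hD.isInitialSegment_lowerSegment d
  have hhi : IsInitialSegment μ W (⋂ d ∈ hi, L d) :=
    .biInter (hD.countable.mono (sep_subset D _)) fun d _ ↦ hD.isInitialSegment_lowerSegment d
  have hμlo := hD.measure_biUnion_lowerSegment hW (sep_subset D fun d ↦ x ∉ L d)
  have hμhi := hD.measure_biInter_lowerSegment hW (sep_subset D fun d ↦ x ∈ L d)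
    ⟨_, hD.measure_univ_mem, hx⟩
  rcases le_or_gt (sInf hi) (sSup lo) with hle | hlt
  · refine measure_mono_null (sdiff_subset.trans hsub) ?_
    rw [measure_sdiff (iUnion₂_subset fun d hd ↦ subset_iInter₂ fun d' hd' ↦
      lowerSegment_mono D (hlohi d hd d' hd').le) hlo.1.nullMeasurableSet (measure_ne_top _ _),
      hμlo, hμhi]
    exact tsub_eq_zero_of_le hle
  · have hgap : (sSup lo, sInf hi) ∈ gaps (initialMeasures μ W) :=
      isGap_sSup_sInf hD.dense (fun d hd ↦ (em (x ∈ L d)).elim (fun h ↦ .inr ⟨hd, h⟩)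
        fun h ↦ .inl ⟨hd, h⟩) (show sSup lo ∈ initialMeasures μ W from ⟨_, hlo, hμlo⟩)
        (show sInf hi ∈ initialMeasures μ W from ⟨_, hhi, hμhi⟩) hlt
    obtain ⟨hp, hq⟩ := hD.mem_of_isGap _ _ hgap
    have hplo : sSup lo ∈ lo := ⟨hp, fun h ↦ (sInf_le (show _ ∈ hi from ⟨hp, h⟩)).not_gt hlt⟩
    have hqhi : sInf hi ∈ hi :=
      ⟨hq, by_contra fun h ↦ (le_sSup (show _ ∈ lo from ⟨hq, h⟩)).not_gt hlt⟩
    refine measure_mono_null (fun y ⟨hy, hyI⟩ ↦ hyI (mem_iUnion_of_mem ⟨_, hgap⟩ ?_)) measure_empty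
    obtain ⟨hyhi, hylo⟩ := hsub hy
    exact ⟨mem_iInter₂.1 hyhi _ hqhi, fun h ↦ hylo (mem_biUnion hplo h)⟩

lemma ae_transitive_of_subset_compl_iUnion_gapComponent (hD : IsSkeleton μ W D)
    (hW : IsTournamentKernel μ W) {A : Set S} (hA : MeasurableSet A)
    (hAI : A ⊆ (⋃ g : gaps (initialMeasures μ W), gapComponent μ W D g)ᶜ) :
    ∀ᵐ x ∂(Measure.pi fun _ : Fin 3 ↦ μ.restrict A),
      0 < W (x 0) (x 1) → 0 < W (x 1) (x 2) → W (x 0) (x 2) = 1 := by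
  have := hD.countable.to_subtype
  set L := lowerSegment μ W D
  have hmem (d : ℝ≥0∞) : Measurable fun y ↦ y ∈ L d :=
    measurableSet_setOfPred.1 (hD.isInitialSegment_lowerSegment d).1
  have hsep : MeasurableSet {p : S × S | ∃ d : D, ¬(p.1 ∈ L d ↔ p.2 ∈ L d)} :=
    measurableSet_setOfPred.2 <| Measurable.exists fun d ↦
      ((hmem d).comp measurable_fst).iff ((hmem d).comp measurable_snd) |>.not
  have hx : L (μ univ) ∈ ae μ := by
    rw [mem_ae_iff, measure_compl (hD.isInitialSegment_lowerSegment _).1 (measure_ne_top _ _),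
      hD.measure_lowerSegment hW hD.measure_univ_mem, tsub_self]
  refine ae_transitive_of_ae_separated (C := fun d : D ↦ L d)
    (by rw [Measure.prod_restrict]; exact ae_restrict_of_ae hW.2.2)
    (fun d ↦ (hD.isInitialSegment_lowerSegment d).2.restrict A) ?_
  rw [Measure.ae_prod_iff_ae_ae hsep]
  filter_upwards [ae_restrict_of_ae hx] with x hx
  rw [ae_restrict_iff' hA]
  filter_upwards [measure_eq_zero_iff_ae_notMem.1
    (hD.measure_sameSide_diff_iUnion_gapComponent hW hx)] with y hy hyA
  by_contra! h
  exact hy ⟨fun d hd ↦ h ⟨d, hd⟩, hAI hyA⟩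

end IsSkeleton

section Order

variable {D : Set ℝ≥0∞} {g g' : ℝ≥0∞ × ℝ≥0∞}

lemma gapComponent_subset_lowerSegment (hg : g ∈ gaps (initialMeasures μ W))
    (hg' : g' ∈ gaps (initialMeasures μ W)) (hlt : g.1 < g'.1) :
    gapComponent μ W D g ⊆ lowerSegment μ W D g'.1 :=
  fun _ hx ↦ lowerSegment_mono D (IsGap.le_of_lt hg hg' hlt) hx.1

lemma disjoint_gapComponent (hg : g ∈ gaps (initialMeasures μ W))
    (hg' : g' ∈ gaps (initialMeasures μ W)) (hlt : g.1 < g'.1) :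
    Disjoint (gapComponent μ W D g) (gapComponent μ W D g') :=
  disjoint_left.2 fun _ hx hx' ↦ hx'.2 (gapComponent_subset_lowerSegment hg hg' hlt hx)

lemma IsSkeleton.kPrec_gapComponent (hD : IsSkeleton μ W D)
    (hg : g ∈ gaps (initialMeasures μ W)) (hg' : g' ∈ gaps (initialMeasures μ W))
    (hlt : g.1 < g'.1) : KPrec μ W (gapComponent μ W D g) (gapComponent μ W D g') :=
  (hD.isInitialSegment_lowerSegment g'.1).2.mono (gapComponent_subset_lowerSegment hg hg' hlt)
    fun _ hx ↦ hx.2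

end Order

end Chain

/-- Decomposition of a tournament kernel: a countable family of disjoint positive-measure
sets carrying irreducible restrictions, linearly ordered by `≺`, whose complement `I`
carries a transitive restriction on every positive-measure subset, with a.e. point of `I`
comparable to each component. -/
theorem stmt18 {S : Type*} [MeasurableSpace S] (μ : Measure S) [IsProbabilityMeasure μ]
    (W : S → S → ℝ) (hW : IsTournamentKernel μ W) :
    ∃ (Q : Type) (_ : Countable Q) (T : Q → Set S),
      (∀ i : Q, MeasurableSet (T i)) ∧
      (∀ i : Q, 0 < μ (T i)) ∧
      (∀ i j : Q, i ≠ j → Disjoint (T i) (T j)) ∧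
      -- (1) each restriction `W|_{T i}` is irreducible
      (∀ i : Q, ¬ ∃ B : Set S, MeasurableSet B ∧ B ⊆ T i ∧ 0 < μ B ∧ μ B < μ (T i) ∧
        ∀ᵐ p ∂(μ.prod μ), p.1 ∈ B → p.2 ∈ T i \ B → W p.1 p.2 = 1) ∧
      -- (2) `≺` linearly orders the components
      (∃ _ : LinearOrder Q, ∀ i j : Q, i < j → KPrec μ W (T i) (T j)) ∧
      -- (3) every positive-measure subset of `I` carries a transitive restriction
      (∀ A : Set S, MeasurableSet A → A ⊆ (⋃ i : Q, T i)ᶜ → 0 < μ A →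
        ∀ᵐ x ∂(Measure.pi fun _ : Fin 3 => μ.restrict A),
          0 < W (x 0) (x 1) → 0 < W (x 1) (x 2) → W (x 0) (x 2) = 1) ∧
      -- (4) a.e. point of `I` dominates or is dominated by each component
      (∀ᵐ x ∂(μ.restrict (⋃ i : Q, T i)ᶜ), ∀ i : Q,
        (∀ᵐ y ∂(μ.restrict (T i)), W x y = 1) ∨
        (∀ᵐ y ∂(μ.restrict (T i)), W x y = 0)) := by
  obtain ⟨D, hD⟩ := exists_isSkeleton μ W
  set G := gaps (initialMeasures μ W)
  let : LinearOrder G := LinearOrder.lift' _ (injective_fst_gaps _)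
  refine ⟨G, (countable_gaps _).to_subtype, fun g ↦ gapComponent μ W D g,
    fun g ↦ hD.measurableSet_gapComponent g, fun g ↦ ?_, fun g g' hne ↦ ?_,
    fun g ↦ hD.not_exists_initial_subset_gapComponent hW g.2,
    ⟨inferInstance, fun g g' hlt ↦ hD.kPrec_gapComponent g.2 g'.2 hlt⟩,
    fun A hA hAI _ ↦ hD.ae_transitive_of_subset_compl_iUnion_gapComponent hW hA hAI,
    hD.ae_dichotomy_gapComponent hW⟩
  · rw [hD.measure_gapComponent hW g.2]
    exact tsub_pos_of_lt g.2.lt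
  · rcases lt_or_gt_of_ne hne with hlt | hlt
    exacts [disjoint_gapComponent g.2 g'.2 hlt, (disjoint_gapComponent g'.2 g.2 hlt).symm]
end
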